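/- For the 1D finite difference operator Ω_{1D-DIF} ∈ ℝ^{(d-1)×d} (with (Ωz)_i = z_{i+1} - z_i), the signal z ∈ ℝ^{201} defined by z_i = 1 for 1 ≤ i ≤ 100, z_i = -1 for 101 ≤ i ≤ 200, and z_{201} = 1.5 satisfies the following: the thresholding projection (projecting onto the cosupport consisting of the 199 indices with smallest |Ωz| entries) has squared error at least 200, while there exists a 199-cosparse vector v (piecewise constant with two pieces) with ‖z - v‖₂ ≤ 2.5 < √200. Hence simple thresholding is not an optimal cosparse projection for Ω_{1D-DIF}, and its near-optimality constant exceeds 1. -/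

import Mathlib

noncomputable section

abbrev Evec (d : ℕ) := EuclideanSpace ℝ (Fin d)

def nullSp {d p : ℕ} (Om : Evec d →L[ℝ] Evec p) (Λ : Finset (Fin p)) : Submodule ℝ (Evec d) where
  carrier := {x | ∀ i ∈ Λ, Om x i = 0}
  zero_mem' := by intro i _; simp
  add_mem' := by intro a b ha hb i hi; simp [ha i hi, hb i hi]
  smul_mem' := by intro c a ha i hi; simp [ha i hi]

def Qp {d p : ℕ} (Om : Evec d →L[ℝ] Evec p) (Λ : Finset (Fin p)) : Evec d →L[ℝ] Evec d :=
  (nullSp Om Λ).subtypeL ∘L (nullSp Om Λ).orthogonalProjectionOnto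

def Cosparse {d p : ℕ} (Om : Evec d →L[ℝ] Evec p) (ℓ : ℕ) (v : Evec d) : Prop :=
  ℓ ≤ {i : Fin p | Om v i = 0}.ncard

def ORIP {d m p : ℕ} (M : Evec d →L[ℝ] Evec m) (Om : Evec d →L[ℝ] Evec p) (ℓ : ℕ) (δ : ℝ) : Prop :=
  ∀ v : Evec d, Cosparse Om ℓ v →
    (1 - δ) * ‖v‖ ^ 2 ≤ ‖M v‖ ^ 2 ∧ ‖M v‖ ^ 2 ≤ (1 + δ) * ‖v‖ ^ 2

lemma norm_sq_eq' {d : ℕ} (x : Evec d) : ‖x‖ ^ 2 = ∑ i, (x i) ^ 2 := by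
  rw [EuclideanSpace.norm_eq, Real.sq_sqrt (by positivity)]
  simp [sq_abs]

/-- Sub-optimality of thresholding for the 1D finite difference operator: for the
signal z with 100 ones, 100 minus-ones and last entry 1.5, every vector in the
null space of the thresholding-selected cosupport (all difference constraints except
the last one) has squared error at least 200, while some 199-cosparse vector v
satisfies ‖z - v‖ ≤ 2.5 < √200. -/
theorem stmt16 (Om : Evec 201 →L[ℝ] Evec 200) (z : Evec 201)
    (hOm : ∀ (u : Evec 201) (i : Fin 200), Om u i = u i.succ - u i.castSucc)
    (hz : ∀ i : Fin 201, z i =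
      if (i : ℕ) < 100 then 1 else if (i : ℕ) < 200 then -1 else 1.5) :
    (∀ w ∈ nullSp Om (Finset.univ.erase (199 : Fin 200)), (200 : ℝ) ≤ ‖z - w‖ ^ 2) ∧
    (∃ v : Evec 201, Cosparse Om 199 v ∧ ‖z - v‖ ≤ 2.5) ∧
    (2.5 : ℝ) < Real.sqrt 200 := by
  refine ⟨?_, ?_, ?_⟩
  · intro w hw
    have hw' : ∀ i ∈ Finset.univ.erase (199 : Fin 200), Om w i = 0 := hw
    set c : ℝ := w ⟨0, by norm_num⟩ with hc
    have hconst : ∀ n (h : n < 200), w ⟨n, by omega⟩ = c := by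
      intro n
      induction n with
      | zero => intro h; rfl
      | succ k ih =>
        intro h
        have hk : k < 200 := by omega
        have h99 : (⟨k, hk⟩ : Fin 200) ∈ Finset.univ.erase (199 : Fin 200) := by
          simp [Fin.ext_iff]; omega
        have := hw' ⟨k, hk⟩ h99
        rw [hOm] at this
        have hsucc : w (Fin.succ ⟨k, hk⟩) = w (Fin.castSucc ⟨k, hk⟩) := by linarith
        have : w (⟨k + 1, by omega⟩ : Fin 201) = w (⟨k, by omega⟩ : Fin 201) := hsucc
        rw [this, ih (by omega)]
    rw [norm_sq_eq']
    have key : ∀ i : Fin 201,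
        (if (i : ℕ) < 100 then (1 - c) ^ 2 else if (i : ℕ) < 200 then (-1 - c) ^ 2 else 0)
          ≤ ((z - w) i) ^ 2 := by
      intro i
      have hzi := hz i
      have hsub : (z - w) i = z i - w i := rfl
      by_cases h1 : (i : ℕ) < 100
      · have hwc : w i = c := by
          have := hconst i (by omega)
          simpa using this
        rw [hsub, hzi, hwc]; simp [h1]
      · by_cases h2 : (i : ℕ) < 200
        · have hwc : w i = c := by
            have := hconst i (by omega)
            simpa using this
          rw [hsub, hzi, hwc]; simp [h1, h2]
        · simp [h1, h2]; positivity
    have hsum := Finset.sum_le_sum (s := Finset.univ) (fun i _ => key i)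
    refine le_trans ?_ hsum
    have hval : ∑ i : Fin 201,
        (if (i : ℕ) < 100 then (1 - c) ^ 2 else if (i : ℕ) < 200 then (-1 - c) ^ 2 else 0)
        = 100 * (1 - c) ^ 2 + 100 * (-1 - c) ^ 2 := by
      rw [Fin.sum_univ_eq_sum_range
        (fun k => if k < 100 then (1 - c) ^ 2 else if k < 200 then (-1 - c) ^ 2 else 0)]
      rw [Finset.sum_range_succ]
      have h200 : (if 200 < 100 then (1 - c) ^ 2 else if 200 < 200 then (-1 - c) ^ 2 else 0) = 0 := by
        norm_num
      rw [h200, add_zero, Finset.range_eq_Ico,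
        ← Finset.sum_Ico_consecutive _ (by norm_num : (0:ℕ) ≤ 100) (by norm_num : (100:ℕ) ≤ 200)]
      have e1 : ∑ k ∈ Finset.Ico 0 100,
          (if k < 100 then (1 - c) ^ 2 else if k < 200 then (-1 - c) ^ 2 else 0)
          = 100 * (1 - c) ^ 2 := by
        calc ∑ k ∈ Finset.Ico 0 100,
              (if k < 100 then (1 - c) ^ 2 else if k < 200 then (-1 - c) ^ 2 else 0)
            = ∑ _k ∈ Finset.Ico 0 100, (1 - c) ^ 2 :=
              Finset.sum_congr rfl (fun k hk => by
                simp only [Finset.mem_Ico] at hk; simp [hk.2])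
          _ = 100 * (1 - c) ^ 2 := by
              rw [Finset.sum_const, Nat.card_Ico]; simp [nsmul_eq_mul]
      have e2 : ∑ k ∈ Finset.Ico 100 200,
          (if k < 100 then (1 - c) ^ 2 else if k < 200 then (-1 - c) ^ 2 else 0)
          = 100 * (-1 - c) ^ 2 := by
        calc ∑ k ∈ Finset.Ico 100 200,
              (if k < 100 then (1 - c) ^ 2 else if k < 200 then (-1 - c) ^ 2 else 0)
            = ∑ _k ∈ Finset.Ico 100 200, (-1 - c) ^ 2 :=
              Finset.sum_congr rfl (fun k hk => by
                simp only [Finset.mem_Ico] at hk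
                have : ¬ k < 100 := by omega
                simp [this, hk.2])
          _ = 100 * (-1 - c) ^ 2 := by
              rw [Finset.sum_const, Nat.card_Ico]; norm_num [nsmul_eq_mul]
      rw [e1, e2]
    rw [hval]
    nlinarith [sq_nonneg c]
  · obtain ⟨v, hv⟩ : ∃ v : Evec 201, ∀ i, v i = if (i : ℕ) < 100 then 1 else -1 :=
      ⟨WithLp.toLp 2 (fun i : Fin 201 => if (i : ℕ) < 100 then (1 : ℝ) else -1), fun i => rfl⟩
    have hsubapp : ∀ i, (z - v) i = z i - v i := fun i => rfl
    refine ⟨v, ?_, ?_⟩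
    · unfold Cosparse
      have hsub : (↑(Finset.univ.erase (99 : Fin 200)) : Set (Fin 200)) ⊆
          {i : Fin 200 | Om v i = 0} := by
        intro i hi
        simp only [Finset.coe_erase, Set.mem_diff, Set.mem_singleton_iff] at hi
        have hne : (i : ℕ) ≠ 99 := by
          intro h
          exact hi.2 (by apply Fin.ext; simpa using h)
        simp only [Set.mem_setOf_eq]
        rw [hOm, hv, hv]
        have hs : (i.succ : ℕ) = (i : ℕ) + 1 := rfl
        have hcs : (i.castSucc : ℕ) = (i : ℕ) := rfl
        rw [hs, hcs]
        by_cases h : (i : ℕ) < 99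
        · simp [show (i:ℕ) + 1 < 100 by omega, show (i:ℕ) < 100 by omega]
        · have h1 : ¬ (i : ℕ) + 1 < 100 := by omega
          have h2 : ¬ (i : ℕ) < 100 := by omega
          simp [h1, h2]
      calc (199 : ℕ) = (Finset.univ.erase (99 : Fin 200)).card := by
            rw [Finset.card_erase_of_mem (Finset.mem_univ _)]
            simp
        _ = (↑(Finset.univ.erase (99 : Fin 200)) : Set (Fin 200)).ncard := by
            rw [Set.ncard_coe_finset]
        _ ≤ _ := Set.ncard_le_ncard hsub (Set.toFinite _)
    · have hnorm : ‖z - v‖ ^ 2 = 6.25 := by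
        rw [norm_sq_eq']
        rw [Finset.sum_eq_single (⟨200, by norm_num⟩ : Fin 201)]
        · rw [hsubapp, hz, hv]
          norm_num
        · intro i _ hne
          have hlt : (i : ℕ) < 200 := by
            have := i.isLt
            rcases Nat.lt_or_ge (i : ℕ) 200 with h | h
            · exact h
            · exfalso; apply hne; apply Fin.ext; simp; omega
          rw [hsubapp, hz, hv]
          by_cases h : (i : ℕ) < 100
          · simp [h]
          · simp [h, hlt]
        · intro h; exact absurd (Finset.mem_univ _) h
      have : ‖z - v‖ = 2.5 := by
        have hnn : (0:ℝ) ≤ ‖z - v‖ := norm_nonneg _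
        nlinarith
      rw [this]
  · have h25 : (2.5:ℝ) = Real.sqrt (2.5 ^ 2) := (Real.sqrt_sq (by norm_num)).symm
    rw [h25]
    exact Real.sqrt_lt_sqrt (by positivity) (by norm_num)
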